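/- (Vertical quadrilateral lemma.) Let X and Y be proper, geodesically complete, Gromov δ-hyperbolic, Busemann metric spaces. Let a₁, a₂, b₁, b₂ ∈ X⋈Y, let D > 1, and for i,j ∈ {1,2} let V_ij: [0,l_ij] → X⋈Y be vertical geodesic segments with l_ij > 2D such that: (a) d_⋈(V_ij(0), a_i) ≤ D; (b) d_⋈(V_ij(l_ij), b_j) ≤ D; (c) d_⋈(V_i1(t), im(V_i2)) ≥ t/10 − D for all t ∈ [0,l_i1]; (d) d_⋈(V_1j(l_1j − t), im(V_2j)) ≥ t/10 − D for all t ∈ [0,l_1j]; and suppose the four V_ij all have the same orientation. Then there is a constant M depending only on X⋈Y such that: if all four are upward oriented then d_Y(a₁^Y, a₂^Y) ≤ M·D and d_X(b₁^X, b₂^X) ≤ M·D; and if all four are downward oriented then d_X(a₁^X, a₂^X) ≤ M·D and d_Y(b₁^Y, b₂^Y) ≤ M·D. -/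

import Mathlib

open Set Filter MeasureTheory
open scoped ENNReal

noncomputable section

/-- `Φ` is a `(k,c)`-quasi-isometry with respect to the explicit distance
functions `dA` and `dB`. -/
def QIWith {A B : Type*} (dA : A → A → ℝ) (dB : B → B → ℝ) (k c : ℝ) (Φ : A → B) : Prop :=
  (∀ x x' : A, k⁻¹ * dA x x' - c ≤ dB (Φ x) (Φ x') ∧ dB (Φ x) (Φ x') ≤ k * dA x x' + c) ∧
    ∀ y : B, ∃ x : A, dB (Φ x) y ≤ c

/-- `γ` is a geodesic (parametrized by arclength) on the parameter set `s`,
with respect to the distance function `d`. -/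
def IsGeodesicOnD {Z : Type*} (d : Z → Z → ℝ) (γ : ℝ → Z) (s : Set ℝ) : Prop :=
  ∀ t ∈ s, ∀ u ∈ s, d (γ t) (γ u) = |t - u|

/-- `γ` is a geodesic parametrized proportionally to arclength on `s`. -/
def IsAffineGeodesicOnD {Z : Type*} (d : Z → Z → ℝ) (γ : ℝ → Z) (s : Set ℝ) : Prop :=
  ∃ c : ℝ, 0 ≤ c ∧ ∀ t ∈ s, ∀ u ∈ s, d (γ t) (γ u) = c * |t - u|

/-- Gromov hyperbolicity (four-point condition) for the distance function `d`. -/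
def GromovHyperbolicD {Z : Type*} (d : Z → Z → ℝ) (δ : ℝ) : Prop :=
  ∀ x y z w : Z, d x y + d z w ≤ max (d x z + d y w) (d x w + d y z) + 2 * δ

/-- Every two points are joined by a geodesic. -/
def GeodesicSpaceD {Z : Type*} (d : Z → Z → ℝ) : Prop :=
  ∀ x y : Z, ∃ γ : ℝ → Z, γ 0 = x ∧ γ (d x y) = y ∧ IsGeodesicOnD d γ (Icc 0 (d x y))

/-- Every geodesic segment extends to a bi-infinite geodesic line. -/
def GeodesicallyCompleteD {Z : Type*} (d : Z → Z → ℝ) : Prop :=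
  ∀ (γ : ℝ → Z) (a b : ℝ), a ≤ b → IsGeodesicOnD d γ (Icc a b) →
    ∃ γ' : ℝ → Z, IsGeodesicOnD d γ' univ ∧ EqOn γ γ' (Icc a b)

/-- Busemann convexity: the distance between any two geodesics parametrized
proportionally to arclength is a convex function. -/
def BusemannD {Z : Type*} (d : Z → Z → ℝ) : Prop :=
  ∀ (γ₁ γ₂ : ℝ → Z) (s : Set ℝ), Convex ℝ s →
    IsAffineGeodesicOnD d γ₁ s → IsAffineGeodesicOnD d γ₂ s →
    ConvexOn ℝ s fun t => d (γ₁ t) (γ₂ t)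

/-- A proper, geodesically complete, Gromov `δ`-hyperbolic, Busemann metric space
together with a distinguished vertical geodesic ray `ray` from the base point
`ray 0`, determining a boundary point `a ∈ ∂X`. -/
structure HoroSpace (X : Type*) [MetricSpace X] where
  δ : ℝ
  δ_nonneg : 0 ≤ δ
  proper : ProperSpace X
  hyperbolic : GromovHyperbolicD (fun x y : X => dist x y) δ
  geodesic : GeodesicSpaceD (fun x y : X => dist x y)
  geodComplete : GeodesicallyCompleteD (fun x y : X => dist x y)
  busemann : BusemannD (fun x y : X => dist x y)
  ray : ℝ → X
  ray_geodesic : IsGeodesicOnD (fun x y : X => dist x y) ray (Ici 0)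

/-- The height function `h(x) = −limsup_{t→∞} (d(x, V_w(t)) − t)`
(the opposite of the Busemann function of the distinguished ray). -/
def HoroSpace.height {X : Type*} [MetricSpace X] (H : HoroSpace X) (x : X) : ℝ :=
  - Filter.limsup (fun t : ℝ => dist x (H.ray t) - t) Filter.atTop

/-- The disk `D_r(p)` of radius `r` around `p` inside the horosphere through `p`. -/
def HoroSpace.disk {X : Type*} [MetricSpace X] (H : HoroSpace X) (r : ℝ) (p : X) : Set X :=
  {x : X | H.height x = H.height p ∧ dist x p ≤ r}

/-- The projection `π_z(A)`: points of the horosphere at height `z` whose upward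
vertical geodesic ray meets `A`. -/
def HoroSpace.proj {X : Type*} [MetricSpace X] (H : HoroSpace X) (z : ℝ) (A : Set X) :
    Set X :=
  {x : X | H.height x = z ∧ ∃ γ : ℝ → X,
      IsGeodesicOnD (fun a b : X => dist a b) γ (Ici z) ∧
      (∀ t ∈ Ici z, H.height (γ t) = t) ∧ γ z = x ∧ ∃ t ∈ Ici z, γ t ∈ A}

/-- The horospherical product `X ⋈ Y`: pairs whose heights add up to zero. -/
abbrev HoroProd {X Y : Type*} [MetricSpace X] [MetricSpace Y]
    (HX : HoroSpace X) (HY : HoroSpace Y) : Type _ :=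
  {p : X × Y // HX.height p.1 + HY.height p.2 = 0}

/-- `V` is a vertical geodesic of `X ⋈ Y` on the parameter set `s`: a pair of
vertical geodesics of `X` and `Y` at opposite heights, parametrized by arclength
by its height (up to orientation and an additive shift). -/
def IsVerticalOn {X Y : Type*} [MetricSpace X] [MetricSpace Y]
    (HX : HoroSpace X) (HY : HoroSpace Y)
    (V : ℝ → HoroProd HX HY) (s : Set ℝ) : Prop :=
  IsGeodesicOnD (fun a b : X => dist a b) (fun t => (V t).1.1) s ∧
  IsGeodesicOnD (fun a b : Y => dist a b) (fun t => (V t).1.2) s ∧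
  ∀ t ∈ s, ∀ u ∈ s, |HX.height ((V t).1.1) - HX.height ((V u).1.1)| = |t - u|

/-- A distance `d_⋈` on `X ⋈ Y` induced by an admissible norm: the height is
`1`-Lipschitz, `2·d_⋈ ≥ d_X + d_Y`, `d_⋈` agrees with
`d_X + d_Y − Δh` up to a bounded additive constant, and vertical geodesics of
`X ⋈ Y` are geodesics for `d_⋈`. -/
structure HoroMetric {X Y : Type*} [MetricSpace X] [MetricSpace Y]
    (HX : HoroSpace X) (HY : HoroSpace Y) where
  d : HoroProd HX HY → HoroProd HX HY → ℝ
  d_self : ∀ p, d p p = 0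
  d_comm : ∀ p q, d p q = d q p
  d_triangle : ∀ p q r, d p r ≤ d p q + d q r
  eq_of_d : ∀ p q, d p q = 0 → p = q
  height_lip : ∀ p q, |HX.height p.1.1 - HX.height q.1.1| ≤ d p q
  two_d_ge : ∀ p q, dist p.1.1 q.1.1 + dist p.1.2 q.1.2 ≤ 2 * d p q
  C : ℝ
  C_nonneg : 0 ≤ C
  approx : ∀ p q,
    |d p q - (dist p.1.1 q.1.1 + dist p.1.2 q.1.2 -
      |HX.height p.1.1 - HX.height q.1.1|)| ≤ C
  vertical_geodesic : ∀ (V : ℝ → HoroProd HX HY) (s : Set ℝ),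
    IsVerticalOn HX HY V s → ∀ t ∈ s, ∀ u ∈ s, d (V t) (V u) = |t - u|

/-- `γ` is a `(k,c)`-quasigeodesic on the parameter set `s`. -/
def IsQGOn {Z : Type*} (d : Z → Z → ℝ) (k c : ℝ) (γ : ℝ → Z) (s : Set ℝ) : Prop :=
  ∀ t ∈ s, ∀ u ∈ s,
    k⁻¹ * |t - u| - c ≤ d (γ t) (γ u) ∧ d (γ t) (γ u) ≤ k * |t - u| + c

/-- `γ` is continuous on `s` with respect to the distance function `d`. -/
def ContOnD {Z : Type*} (d : Z → Z → ℝ) (γ : ℝ → Z) (s : Set ℝ) : Prop :=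
  ∀ t ∈ s, ∀ ε > (0 : ℝ), ∃ η > (0 : ℝ), ∀ u ∈ s, |u - t| < η → d (γ t) (γ u) < ε

/-- `γ : [a,b] → Z` is `ε`-monotone with respect to the height function `hgt`:
equal heights force parameters to be `ε·(b−a)`-close. -/
def EpsMonotoneOn {Z : Type*} (hgt : Z → ℝ) (ε : ℝ) (γ : ℝ → Z) (a b : ℝ) : Prop :=
  ∀ t₁ ∈ Icc a b, ∀ t₂ ∈ Icc a b, hgt (γ t₁) = hgt (γ t₂) → |t₁ - t₂| ≤ ε * (b - a)

/-- The closed `r`-neighbourhood of `A` with respect to the distance function `d`. -/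
def nbhdD {Z : Type*} (d : Z → Z → ℝ) (r : ℝ) (A : Set Z) : Set Z :=
  {p : Z | ∃ a ∈ A, d p a ≤ r}

/-!
Upward vertical geodesics of a Gromov hyperbolic space fellow-travel: if they start
`A`-close, then points at the same height are `2A + 2δ`-close (four-point condition against a
far point of the ray defining the heights). In the upward case the `X`-components of the sides
of the quadrilateral are upward, and so are the `Y`-components read backwards; each factor then
sees four upward segments, close in pairs at their bottoms and at their tops. The fellow
travelling in one factor turns the divergence of the sides in `X ⋈ Y` into divergence in the
other factor, and divergence forces the tops of the two sides issued from neighbouring bottoms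
to lie at heights differing by `O(D)`; fellow travelling then makes these tops `O(D)`-close.
The downward case is the upward one for `Y ⋈ X`.
-/

open Topology

namespace HoroSpace

variable {Z : Type*} [MetricSpace Z] (H : HoroSpace Z)

theorem dist_ray_ray {r s : ℝ} (hr : 0 ≤ r) (hrs : r ≤ s) :
    dist (H.ray r) (H.ray s) = s - r := by
  have : dist (H.ray r) (H.ray s) = |r - s| := H.ray_geodesic r hr s (hr.trans hrs)
  rw [this, abs_sub_comm, abs_of_nonneg (sub_nonneg.2 hrs)]

theorem dist_ray_sub_le (x : Z) {r s : ℝ} (hr : 0 ≤ r) (hrs : r ≤ s) :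
    dist x (H.ray s) - s ≤ dist x (H.ray r) - r := by
  linarith [dist_triangle x (H.ray r) (H.ray s), H.dist_ray_ray hr hrs]

theorem tendsto_dist_ray_sub (x : Z) :
    Tendsto (fun t => dist x (H.ray t) - t) atTop (𝓝 (-H.height x)) := by
  set g : ℝ → ℝ := fun t => dist x (H.ray (max t 0)) - max t 0
  have hg_anti : Antitone g := fun s t hst =>
    H.dist_ray_sub_le x (le_max_right s 0) (max_le_max_right 0 hst)
  have hg_bdd : BddBelow (range g) := by
    refine ⟨-dist x (H.ray 0), ?_⟩
    rintro _ ⟨t, rfl⟩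
    linarith [dist_triangle_left (H.ray 0) (H.ray (max t 0)) x,
      H.dist_ray_ray le_rfl (le_max_right t 0)]
  have hfg : (fun t => dist x (H.ray t) - t) =ᶠ[atTop] g := by
    filter_upwards [eventually_ge_atTop 0] with t ht
    simp only [g, max_eq_left ht]
  have hlim := tendsto_atTop_ciInf hg_anti hg_bdd
  have hheight : -H.height x = ⨅ t, g t := by
    rw [height, neg_neg, limsup_congr hfg, hlim.limsup_eq]
  rw [hheight]
  exact hlim.congr' hfg.symm

theorem sub_height_le_dist_ray (x : Z) {r : ℝ} (hr : 0 ≤ r) :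
    r - H.height x ≤ dist x (H.ray r) := by
  have := le_of_tendsto (H.tendsto_dist_ray_sub x)
    (eventually_atTop.2 ⟨r, fun s hs => H.dist_ray_sub_le x hr hs⟩)
  linarith

theorem abs_height_sub_le_dist (x y : Z) : |H.height x - H.height y| ≤ dist x y := by
  have key : ∀ x y : Z, H.height y - H.height x ≤ dist x y := fun x y => by
    have := le_of_tendsto_of_tendsto' (H.tendsto_dist_ray_sub x)
      ((H.tendsto_dist_ray_sub y).add_const (dist x y))
      fun t => by linarith [dist_triangle x y (H.ray t)]
    linarith
  exact abs_sub_le_iff.2 ⟨by linarith [key y x, dist_comm x y], key x y⟩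

/-- As `dist x y = h y - h x`, the point `y` lies almost on geodesics from `x` to far points of
the ray, and so does `w` for `z`; the four-point condition with such a far point concludes. -/
theorem dist_ascend_le {x y z w : Z} {t : ℝ} (hxy : dist x y = t) (hzw : dist z w = t)
    (hy : H.height y = H.height x + t) (hw : H.height w = H.height z + t)
    (hxz : H.height x = H.height z) : dist y w ≤ dist x z + 2 * H.δ := by
  refine le_of_forall_pos_le_add fun ε hε => ?_
  have near : ∀ p, ∀ᶠ r in atTop, dist p (H.ray r) - r < -H.height p + ε := fun p =>
    (tendsto_order.1 (H.tendsto_dist_ray_sub p)).2 _ (lt_add_of_pos_right _ hε)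
  obtain ⟨r, hr, hyr, hwr⟩ := ((eventually_ge_atTop 0).and ((near y).and (near w))).exists
  have hxr := H.sub_height_le_dist_ray x hr
  have hfour := H.hyperbolic y w x (H.ray r)
  have hmax : max (dist y x + dist w (H.ray r)) (dist y (H.ray r) + dist w x) ≤
      r - H.height x + ε + dist x z :=
    max_le (by linarith [dist_comm x y, dist_nonneg (x := x) (y := z)])
      (by linarith [dist_triangle w z x, dist_comm z w, dist_comm z x])
  dsimp only at hfour
  linarith

structure IsUpwardSegment (γ : ℝ → Z) (L : ℝ) : Prop where
  dist_eq : ∀ t ∈ Icc 0 L, ∀ u ∈ Icc 0 L, dist (γ t) (γ u) = |t - u|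
  height_eq : ∀ t ∈ Icc 0 L, H.height (γ t) = H.height (γ 0) + t

namespace IsUpwardSegment

variable {H} {γ₁ γ₂ : ℝ → Z} {L₁ L₂ t₁ t₂ : ℝ}

theorem dist_eq_sub (h : H.IsUpwardSegment γ₁ L₁) {t u : ℝ} (ht : t ∈ Icc 0 L₁)
    (hu : u ∈ Icc 0 L₁) (htu : t ≤ u) : dist (γ₁ t) (γ₁ u) = u - t := by
  rw [h.dist_eq t ht u hu, abs_sub_comm, abs_of_nonneg (sub_nonneg.2 htu)]

theorem dist_le_of_height_eq (h₁ : H.IsUpwardSegment γ₁ L₁) (h₂ : H.IsUpwardSegment γ₂ L₂)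
    (ht₁ : t₁ ∈ Icc 0 L₁) (ht₂ : t₂ ∈ Icc 0 L₂) (heq : H.height (γ₁ t₁) = H.height (γ₂ t₂)) :
    dist (γ₁ t₁) (γ₂ t₂) ≤ 2 * dist (γ₁ 0) (γ₂ 0) + 2 * H.δ := by
  wlog hle : H.height (γ₁ 0) ≤ H.height (γ₂ 0) generalizing γ₁ γ₂ L₁ L₂ t₁ t₂
  · rw [dist_comm, dist_comm (γ₁ 0)]
    exact this h₂ h₁ ht₂ ht₁ heq.symm (le_of_not_ge hle)
  have h₁t := h₁.height_eq t₁ ht₁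
  have h₂t := h₂.height_eq t₂ ht₂
  set σ := H.height (γ₂ 0) - H.height (γ₁ 0)
  have hσt : σ ≤ t₁ := by linarith [ht₂.1]
  have hσ : σ ∈ Icc 0 L₁ := ⟨sub_nonneg.2 hle, hσt.trans ht₁.2⟩
  have h0₁ : (0 : ℝ) ∈ Icc 0 L₁ := ⟨le_rfl, hσ.1.trans hσ.2⟩
  have h0₂ : (0 : ℝ) ∈ Icc 0 L₂ := ⟨le_rfl, ht₂.1.trans ht₂.2⟩
  have hclimb : dist (γ₁ σ) (γ₂ 0) ≤ dist (γ₁ 0) (γ₂ 0) + σ := by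
    have := h₁.dist_eq_sub h0₁ hσ hσ.1
    linarith [dist_triangle_left (γ₁ σ) (γ₂ 0) (γ₁ 0)]
  have hσd : σ ≤ dist (γ₁ 0) (γ₂ 0) := by
    linarith [neg_abs_le (H.height (γ₁ 0) - H.height (γ₂ 0)),
      H.abs_height_sub_le_dist (γ₁ 0) (γ₂ 0)]
  have hascend := H.dist_ascend_le (x := γ₁ σ) (z := γ₂ 0) (t := t₂)
    (by rw [h₁.dist_eq_sub hσ ht₁ hσt]; linarith) (by rw [h₂.dist_eq_sub h0₂ ht₂ ht₂.1, sub_zero])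
    (by rw [h₁.height_eq σ hσ]; linarith) h₂t (by rw [h₁.height_eq σ hσ]; ring)
  linarith

theorem dist_le (h₁ : H.IsUpwardSegment γ₁ L₁) (h₂ : H.IsUpwardSegment γ₂ L₂)
    (ht₁ : t₁ ∈ Icc 0 L₁) (ht₂ : t₂ ∈ Icc 0 L₂) :
    dist (γ₁ t₁) (γ₂ t₂) ≤
      2 * dist (γ₁ 0) (γ₂ 0) + 2 * H.δ + |H.height (γ₁ t₁) - H.height (γ₂ t₂)| := by
  wlog hle : H.height (γ₁ t₁) ≤ H.height (γ₂ t₂) generalizing γ₁ γ₂ L₁ L₂ t₁ t₂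
  · rw [dist_comm, dist_comm (γ₁ 0), abs_sub_comm]
    exact this h₂ h₁ ht₂ ht₁ (le_of_not_ge hle)
  rw [abs_sub_comm, abs_of_nonneg (sub_nonneg.2 hle)]
  have h0₁ : (0 : ℝ) ∈ Icc 0 L₁ := ⟨le_rfl, ht₁.1.trans ht₁.2⟩
  have h0₂ : (0 : ℝ) ∈ Icc 0 L₂ := ⟨le_rfl, ht₂.1.trans ht₂.2⟩
  have h₁t := h₁.height_eq t₁ ht₁
  have h₂t := h₂.height_eq t₂ ht₂
  by_cases hcase : H.height (γ₂ 0) ≤ H.height (γ₁ t₁)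
  · set τ := H.height (γ₁ t₁) - H.height (γ₂ 0)
    have hτt : τ ≤ t₂ := by linarith
    have hτ : τ ∈ Icc 0 L₂ := ⟨sub_nonneg.2 hcase, hτt.trans ht₂.2⟩
    have hlevel := h₁.dist_le_of_height_eq h₂ ht₁ hτ (by rw [h₂.height_eq τ hτ]; ring)
    have hclimb := h₂.dist_eq_sub hτ ht₂ hτt
    linarith [dist_triangle (γ₁ t₁) (γ₂ τ) (γ₂ t₂)]
  · have hbot := abs_le.1 (H.abs_height_sub_le_dist (γ₁ 0) (γ₂ 0))
    have hdown := h₁.dist_eq_sub h0₁ ht₁ ht₁.1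
    have hup := h₂.dist_eq_sub h0₂ ht₂ ht₂.1
    linarith [dist_triangle4 (γ₁ t₁) (γ₁ 0) (γ₂ 0) (γ₂ t₂), dist_comm (γ₁ t₁) (γ₁ 0),
      H.δ_nonneg]

theorem exists_height_eq_max (h : H.IsUpwardSegment γ₁ L₁) (hL : 0 ≤ L₁) {ℓ : ℝ}
    (hℓ : ℓ ≤ H.height (γ₁ L₁)) : ∃ τ ∈ Icc 0 L₁, H.height (γ₁ τ) = max ℓ (H.height (γ₁ 0)) := by
  have htop := h.height_eq L₁ ⟨hL, le_rfl⟩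
  have hτ : max (ℓ - H.height (γ₁ 0)) 0 ∈ Icc 0 L₁ := ⟨le_max_right _ _, max_le (by linarith) hL⟩
  exact ⟨_, hτ, by rw [h.height_eq _ hτ, ← max_add_add_left, add_sub_cancel, add_zero]⟩

end IsUpwardSegment

variable {W : Fin 2 → Fin 2 → ℝ → Z} {L : Fin 2 → Fin 2 → ℝ} {A K : ℝ}

/-- Were the top of `W i' 0` much higher than that of `W i 0`, the point of `W i' 0` at the
height of the latter would stay close, through the tops of `W i 0` and `W i 1`, to a point of
`W i' 1`, against the divergence of `W i' 0` and `W i' 1`. -/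
theorem quad_top_height_le (hW : ∀ i j, H.IsUpwardSegment (W i j) (L i j))
    (hL : ∀ i j, 0 ≤ L i j) (hbot : ∀ i i' j, dist (W i j 0) (W i' j 0) ≤ A)
    (htop : ∀ i, dist (W i 0 (L i 0)) (W i 1 (L i 1)) ≤ A)
    (hdiv : ∀ i, ∀ t ∈ Icc 0 (L i 0), ∀ u ∈ Icc 0 (L i 1),
      (L i 0 - t) / 10 - K ≤ dist (W i 0 t) (W i 1 u))
    (i i' : Fin 2) :
    H.height (W i' 0 (L i' 0)) ≤ H.height (W i 0 (L i 0)) + 71 * A + 10 * K + 40 * H.δ := by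
  have hmemL : ∀ i j, L i j ∈ Icc 0 (L i j) := fun i j => ⟨hL i j, le_rfl⟩
  have htop_eq : ∀ i j, H.height (W i j (L i j)) = H.height (W i j 0) + L i j :=
    fun i j => (hW i j).height_eq _ (hmemL i j)
  have hbot_h : ∀ j, |H.height (W i j 0) - H.height (W i' j 0)| ≤ A :=
    fun j => (H.abs_height_sub_le_dist _ _).trans (hbot i i' j)
  have htop_h : ∀ i, |H.height (W i 0 (L i 0)) - H.height (W i 1 (L i 1))| ≤ A :=
    fun i => (H.abs_height_sub_le_dist _ _).trans (htop i)
  have hA : 0 ≤ A := dist_nonneg.trans (htop i)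
  have hK : -A ≤ K := by
    have := hdiv i' _ (hmemL i' 0) _ (hmemL i' 1)
    rw [sub_self, zero_div] at this
    linarith [htop i']
  set ℓ := H.height (W i 0 (L i 0))
  by_cases hs : H.height (W i' 0 (L i' 0)) ≤ ℓ + A
  · linarith [H.δ_nonneg]
  push Not at hs
  have hℓ : ∀ j, ℓ ≤ H.height (W i' j (L i' j)) :=
    Fin.forall_fin_two.2 ⟨by linarith, by linarith [abs_le.1 (htop_h i')]⟩
  choose τ hτ hτ_height using fun j => (hW i' j).exists_height_eq_max (hL i' j) (hℓ j)
  have hℓ_top : ∀ j, |H.height (W i j (L i j)) - ℓ| ≤ A :=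
    Fin.forall_fin_two.2
      ⟨by show |ℓ - ℓ| ≤ A; rwa [sub_self, abs_zero], by rw [abs_sub_comm]; exact htop_h i⟩
  have hclose_h : ∀ j, |H.height (W i j (L i j)) - H.height (W i' j (τ j))| ≤ A := fun j => by
    have hbot_j := abs_le.1 (hbot_h j)
    have htop_j := abs_le.1 (hℓ_top j)
    rw [hτ_height j, abs_le]
    rcases max_cases ℓ (H.height (W i' j 0)) with ⟨hmax, hcmp⟩ | ⟨hmax, hcmp⟩ <;> rw [hmax] <;>
      constructor <;> linarith [htop_eq i j, hL i j]
  have hclose : ∀ j, dist (W i j (L i j)) (W i' j (τ j)) ≤ 3 * A + 2 * H.δ := fun j => by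
    linarith [(hW i j).dist_le (hW i' j) (hmemL i j) (hτ j), hbot i i' j, hclose_h j]
  have hdiv' := hdiv i' _ (hτ 0) _ (hτ 1)
  have hpath := dist_triangle4 (W i' 0 (τ 0)) (W i 0 (L i 0)) (W i 1 (L i 1)) (W i' 1 (τ 1))
  have hgain : H.height (W i' 0 (L i' 0)) - ℓ ≤ L i' 0 - τ 0 + A := by
    linarith [abs_le.1 (hclose_h 0), (hW i' 0).height_eq _ (hτ 0), htop_eq i' 0]
  linarith [dist_comm (W i' 0 (τ 0)) (W i 0 (L i 0)), hclose 0, hclose 1, htop i]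

theorem quad_dist_top_le (hW : ∀ i j, H.IsUpwardSegment (W i j) (L i j))
    (hL : ∀ i j, 0 ≤ L i j) (hbot : ∀ i i' j, dist (W i j 0) (W i' j 0) ≤ A)
    (htop : ∀ i, dist (W i 0 (L i 0)) (W i 1 (L i 1)) ≤ A)
    (hdiv : ∀ i, ∀ t ∈ Icc 0 (L i 0), ∀ u ∈ Icc 0 (L i 1),
      (L i 0 - t) / 10 - K ≤ dist (W i 0 t) (W i 1 u))
    (i i' : Fin 2) :
    dist (W i 0 (L i 0)) (W i' 0 (L i' 0)) ≤ 73 * A + 10 * K + 42 * H.δ := by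
  have h₁ := H.quad_top_height_le hW hL hbot htop hdiv i i'
  have h₂ := H.quad_top_height_le hW hL hbot htop hdiv i' i
  have hheight : |H.height (W i 0 (L i 0)) - H.height (W i' 0 (L i' 0))| ≤
      71 * A + 10 * K + 40 * H.δ := abs_le.2 ⟨by linarith, by linarith⟩
  linarith [(hW i 0).dist_le (hW i' 0) ⟨hL i 0, le_rfl⟩ ⟨hL i' 0, le_rfl⟩, hbot i i' 0]

end HoroSpace

theorem eq_add_of_abs_sub_eq {φ : ℝ → ℝ} {l : ℝ}
    (hφ : ∀ t ∈ Icc 0 l, ∀ u ∈ Icc 0 l, |φ t - φ u| = |t - u|) (hlt : φ 0 < φ l) :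
    ∀ t ∈ Icc 0 l, φ t = φ 0 + t := by
  intro t ht
  have h0 : (0 : ℝ) ∈ Icc 0 l := ⟨le_rfl, ht.1.trans ht.2⟩
  have hl : l ∈ Icc 0 l := ⟨h0.2, le_rfl⟩
  have hend := hφ l hl 0 h0
  rw [sub_zero, abs_of_pos (sub_pos.2 hlt), abs_of_nonneg hl.1] at hend
  have hlow := (le_abs_self _).trans (hφ t ht 0 h0).le
  have hhigh := (le_abs_self _).trans (hφ l hl t ht).le
  rw [sub_zero, abs_of_nonneg ht.1] at hlow
  rw [abs_of_nonneg (sub_nonneg.2 ht.2)] at hhigh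
  linarith

namespace HoroProd

variable {X Y : Type*} [MetricSpace X] [MetricSpace Y] {HX : HoroSpace X} {HY : HoroSpace Y}

theorem height_snd (p : HoroProd HX HY) : HY.height p.1.2 = -HX.height p.1.1 :=
  eq_neg_of_add_eq_zero_right p.2

theorem abs_height_snd_sub (p q : HoroProd HX HY) :
    |HY.height p.1.2 - HY.height q.1.2| = |HX.height p.1.1 - HX.height q.1.1| := by
  rw [p.height_snd, q.height_snd, neg_sub_neg, abs_sub_comm]

def swap (p : HoroProd HX HY) : HoroProd HY HX :=
  ⟨p.1.swap, (add_comm _ _).trans p.2⟩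

end HoroProd

namespace IsVerticalOn

variable {X Y : Type*} [MetricSpace X] [MetricSpace Y] {HX : HoroSpace X} {HY : HoroSpace Y}
  {V : ℝ → HoroProd HX HY}

theorem swap {s : Set ℝ} (hV : IsVerticalOn HX HY V s) :
    IsVerticalOn HY HX (fun t => (V t).swap) s :=
  ⟨hV.2.1, hV.1, fun t ht u hu =>
    (HoroProd.abs_height_snd_sub (V t) (V u)).trans (hV.2.2 t ht u hu)⟩

variable {l : ℝ}

theorem isUpwardSegment_fst (hV : IsVerticalOn HX HY V (Icc 0 l))
    (hup : HX.height (V 0).1.1 < HX.height (V l).1.1) :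
    HX.IsUpwardSegment (fun t => (V t).1.1) l :=
  ⟨hV.1, eq_add_of_abs_sub_eq hV.2.2 hup⟩

theorem isUpwardSegment_snd_rev (hV : IsVerticalOn HX HY V (Icc 0 l))
    (hup : HX.height (V 0).1.1 < HX.height (V l).1.1) :
    HY.IsUpwardSegment (fun s => (V (l - s)).1.2) l := by
  have hrev : ∀ s ∈ Icc 0 l, l - s ∈ Icc 0 l := fun s => sub_mem_Icc_zero_iff_right.2
  have hheight := eq_add_of_abs_sub_eq hV.2.2 hup
  refine ⟨fun s hs u hu => ?_, fun s hs => ?_⟩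
  · have := hV.2.1 _ (hrev s hs) _ (hrev u hu)
    rwa [sub_sub_sub_cancel_left, abs_sub_comm] at this
  · simp only [HoroProd.height_snd, sub_zero]
    rw [hheight _ (hrev s hs), hheight l ⟨hs.1.trans hs.2, le_rfl⟩]
    ring

end IsVerticalOn

namespace HoroMetric

variable {X Y : Type*} [MetricSpace X] [MetricSpace Y] {HX : HoroSpace X} {HY : HoroSpace Y}
  (P : HoroMetric HX HY) {p q r : HoroProd HX HY} {A D : ℝ}

theorem dist_fst_le (p q : HoroProd HX HY) : dist p.1.1 q.1.1 ≤ 2 * P.d p q := by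
  linarith [P.two_d_ge p q, dist_nonneg (x := p.1.2) (y := q.1.2)]

theorem dist_snd_le (p q : HoroProd HX HY) : dist p.1.2 q.1.2 ≤ 2 * P.d p q := by
  linarith [P.two_d_ge p q, dist_nonneg (x := p.1.1) (y := q.1.1)]

theorem dist_fst_le_of_near (hp : P.d p r ≤ D) (hq : P.d q r ≤ D) :
    dist p.1.1 q.1.1 ≤ 4 * D := by
  linarith [dist_triangle_right p.1.1 q.1.1 r.1.1, P.dist_fst_le p r, P.dist_fst_le q r]

theorem dist_snd_le_of_near (hp : P.d p r ≤ D) (hq : P.d q r ≤ D) :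
    dist p.1.2 q.1.2 ≤ 4 * D := by
  linarith [dist_triangle_right p.1.2 q.1.2 r.1.2, P.dist_snd_le p r, P.dist_snd_le q r]

theorem le_dist_snd (h : dist p.1.1 q.1.1 ≤ A + |HX.height p.1.1 - HX.height q.1.1|) :
    P.d p q - P.C - A ≤ dist p.1.2 q.1.2 := by
  linarith [(abs_le.1 (P.approx p q)).2]

theorem le_dist_fst (h : dist p.1.2 q.1.2 ≤ A + |HY.height p.1.2 - HY.height q.1.2|) :
    P.d p q - P.C - A ≤ dist p.1.1 q.1.1 := by
  rw [HoroProd.abs_height_snd_sub] at h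
  linarith [(abs_le.1 (P.approx p q)).2]

def swap : HoroMetric HY HX where
  d p q := P.d p.swap q.swap
  d_self p := P.d_self p.swap
  d_comm p q := P.d_comm p.swap q.swap
  d_triangle p q r := P.d_triangle p.swap q.swap r.swap
  eq_of_d p q h := congrArg HoroProd.swap (P.eq_of_d p.swap q.swap h)
  height_lip p q := (HoroProd.abs_height_snd_sub p q).symm.trans_le (P.height_lip p.swap q.swap)
  two_d_ge p q := (add_comm _ _).trans_le (P.two_d_ge p.swap q.swap)
  C := P.C
  C_nonneg := P.C_nonneg
  approx p q := by
    rw [← HoroProd.abs_height_snd_sub p q, add_comm (dist p.1.1 q.1.1)]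
    exact P.approx p.swap q.swap
  vertical_geodesic V s hV := P.vertical_geodesic (fun t => (V t).swap) s hV.swap

end HoroMetric

/-- The hypotheses of the vertical quadrilateral lemma, orientation aside. -/
structure IsVerticalQuad {X Y : Type*} [MetricSpace X] [MetricSpace Y]
    {HX : HoroSpace X} {HY : HoroSpace Y} (P : HoroMetric HX HY)
    (a b : Fin 2 → HoroProd HX HY) (D : ℝ)
    (V : Fin 2 → Fin 2 → ℝ → HoroProd HX HY) (l : Fin 2 → Fin 2 → ℝ) : Prop where
  one_lt : 1 < D
  two_mul_lt : ∀ i j, 2 * D < l i j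
  vertical : ∀ i j, IsVerticalOn HX HY (V i j) (Icc 0 (l i j))
  start_near : ∀ i j, P.d (V i j 0) (a i) ≤ D
  end_near : ∀ i j, P.d (V i j (l i j)) (b j) ≤ D
  diverge_start : ∀ i, ∀ t ∈ Icc (0 : ℝ) (l i 0), ∀ u ∈ Icc (0 : ℝ) (l i 1),
    t / 10 - D ≤ P.d (V i 0 t) (V i 1 u)
  diverge_end : ∀ j, ∀ t ∈ Icc (0 : ℝ) (l 0 j), ∀ u ∈ Icc (0 : ℝ) (l 1 j),
    t / 10 - D ≤ P.d (V 0 j (l 0 j - t)) (V 1 j u)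

namespace IsVerticalQuad

variable {X Y : Type*} [MetricSpace X] [MetricSpace Y] {HX : HoroSpace X} {HY : HoroSpace Y}
  {P : HoroMetric HX HY} {a b : Fin 2 → HoroProd HX HY} {D : ℝ}
  {V : Fin 2 → Fin 2 → ℝ → HoroProd HX HY} {l : Fin 2 → Fin 2 → ℝ}

theorem swap (hq : IsVerticalQuad P a b D V l) :
    IsVerticalQuad P.swap (fun i => (a i).swap) (fun j => (b j).swap) D
      (fun i j t => (V i j t).swap) l :=
  ⟨hq.one_lt, hq.two_mul_lt, fun i j => (hq.vertical i j).swap, hq.start_near, hq.end_near,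
    hq.diverge_start, hq.diverge_end⟩

theorem len_nonneg (hq : IsVerticalQuad P a b D V l) (i j : Fin 2) : 0 ≤ l i j := by
  linarith [hq.two_mul_lt i j, hq.one_lt]

theorem dist_snd_start_le (hq : IsVerticalQuad P a b D V l)
    (hup : ∀ i j, HX.height (V i j 0).1.1 < HX.height (V i j (l i j)).1.1) :
    dist (a 0).1.2 (a 1).1.2 ≤ 386 * D + 10 * P.C + 62 * (HX.δ + HY.δ) := by
  have hX := fun i j => (hq.vertical i j).isUpwardSegment_fst (hup i j)
  have hY := fun i j => (hq.vertical i j).isUpwardSegment_snd_rev (hup i j)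
  have hcore := HY.quad_dist_top_le hY hq.len_nonneg (A := 4 * D)
    (K := 9 * D + P.C + 2 * HX.δ)
    (fun i i' j => by
      simpa only [sub_zero] using P.dist_snd_le_of_near (hq.end_near i j) (hq.end_near i' j))
    (fun i => by
      simpa only [sub_self] using P.dist_snd_le_of_near (hq.start_near i 0) (hq.start_near i 1))
    (fun i s hs u hu => by
      have hs' := sub_mem_Icc_zero_iff_right.2 hs
      have hu' := sub_mem_Icc_zero_iff_right.2 hu
      have hfell := (hX i 0).dist_le (hX i 1) hs' hu'
      linarith [hq.diverge_start i _ hs' _ hu', P.le_dist_snd hfell,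
        P.dist_fst_le_of_near (hq.start_near i 0) (hq.start_near i 1)])
    0 1
  simp only [sub_self] at hcore
  linarith [dist_triangle4 (a 0).1.2 (V 0 0 0).1.2 (V 1 0 0).1.2 (a 1).1.2,
    dist_comm (a 0).1.2 (V 0 0 0).1.2, P.dist_snd_le (V 0 0 0) (a 0),
    P.dist_snd_le (V 1 0 0) (a 1), hq.start_near 0 0, hq.start_near 1 0, HX.δ_nonneg,
    HY.δ_nonneg]

theorem dist_fst_end_le (hq : IsVerticalQuad P a b D V l)
    (hup : ∀ i j, HX.height (V i j 0).1.1 < HX.height (V i j (l i j)).1.1) :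
    dist (b 0).1.1 (b 1).1.1 ≤ 386 * D + 10 * P.C + 62 * (HX.δ + HY.δ) := by
  have hX := fun i j => (hq.vertical j i).isUpwardSegment_fst (hup j i)
  have hY := fun i j => (hq.vertical i j).isUpwardSegment_snd_rev (hup i j)
  have hcore := HX.quad_dist_top_le hX (fun i j => hq.len_nonneg j i) (A := 4 * D)
    (K := 9 * D + P.C + 2 * HY.δ)
    (fun i i' j => P.dist_fst_le_of_near (hq.start_near j i) (hq.start_near j i'))
    (fun i => P.dist_fst_le_of_near (hq.end_near 0 i) (hq.end_near 1 i))
    (fun i t ht u hu => by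
      have ht' := sub_mem_Icc_zero_iff_right.2 ht
      have hdiv := hq.diverge_end i _ ht' u hu
      have hfell := (hY 0 i).dist_le (hY 1 i) ht' (sub_mem_Icc_zero_iff_right.2 hu)
      simp only [sub_sub_cancel, sub_zero] at hdiv hfell
      linarith [P.le_dist_fst hfell, P.dist_snd_le_of_near (hq.end_near 0 i) (hq.end_near 1 i)])
    0 1
  linarith [dist_triangle4 (b 0).1.1 (V 0 0 (l 0 0)).1.1 (V 0 1 (l 0 1)).1.1 (b 1).1.1,
    dist_comm (b 0).1.1 (V 0 0 (l 0 0)).1.1, P.dist_fst_le (V 0 0 (l 0 0)) (b 0),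
    P.dist_fst_le (V 0 1 (l 0 1)) (b 1), hq.end_near 0 0, hq.end_near 0 1, HX.δ_nonneg,
    HY.δ_nonneg]

end IsVerticalQuad

/-- Vertical quadrilateral lemma. A coarse quadrilateral with
vertices `a 0, a 1, b 0, b 1`, whose sides are vertical geodesic segments
`V i j : [0, l i j] → X ⋈ Y` of the same orientation joining the
`D`-neighbourhoods of the vertices and diverging quickly from each other, has
two vertices on the same `X`-horosphere and the other two on the same
`Y`-horosphere, up to an error `M·D` with `M` depending only on `X ⋈ Y`. -/
theorem statement_11 {X Y : Type*} [MetricSpace X] [MetricSpace Y]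
    (HX : HoroSpace X) (HY : HoroSpace Y) (P : HoroMetric HX HY) :
    ∃ M : ℝ, 0 < M ∧
      ∀ (a b : Fin 2 → HoroProd HX HY) (D : ℝ)
        (V : Fin 2 → Fin 2 → ℝ → HoroProd HX HY) (l : Fin 2 → Fin 2 → ℝ),
        1 < D →
        (∀ i j, 2 * D < l i j) →
        (∀ i j, IsVerticalOn HX HY (V i j) (Icc 0 (l i j))) →
        (∀ i j, P.d (V i j 0) (a i) ≤ D) →
        (∀ i j, P.d (V i j (l i j)) (b j) ≤ D) →
        (∀ i, ∀ t ∈ Icc (0 : ℝ) (l i 0), ∀ u ∈ Icc (0 : ℝ) (l i 1),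
          t / 10 - D ≤ P.d (V i 0 t) (V i 1 u)) →
        (∀ j, ∀ t ∈ Icc (0 : ℝ) (l 0 j), ∀ u ∈ Icc (0 : ℝ) (l 1 j),
          t / 10 - D ≤ P.d (V 0 j (l 0 j - t)) (V 1 j u)) →
        ((∀ i j, HX.height ((V i j 0).1.1) < HX.height ((V i j (l i j)).1.1)) ∨
          (∀ i j, HX.height ((V i j (l i j)).1.1) < HX.height ((V i j 0).1.1))) →
        ((∀ i j, HX.height ((V i j 0).1.1) < HX.height ((V i j (l i j)).1.1)) →
            dist (a 0).1.2 (a 1).1.2 ≤ M * D ∧ dist (b 0).1.1 (b 1).1.1 ≤ M * D) ∧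
        ((∀ i j, HX.height ((V i j (l i j)).1.1) < HX.height ((V i j 0).1.1)) →
            dist (a 0).1.1 (a 1).1.1 ≤ M * D ∧ dist (b 0).1.2 (b 1).1.2 ≤ M * D) := by
  have hE : 0 ≤ 10 * P.C + 62 * (HX.δ + HY.δ) := by
    linarith [P.C_nonneg, HX.δ_nonneg, HY.δ_nonneg]
  refine ⟨386 + 10 * P.C + 62 * (HX.δ + HY.δ), by linarith, ?_⟩
  intro a b D V l hD hl hV ha hb hc hd _
  have hq : IsVerticalQuad P a b D V l := ⟨hD, hl, hV, ha, hb, hc, hd⟩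
  have habsorb : ∀ r, r ≤ 386 * D + 10 * P.C + 62 * (HX.δ + HY.δ) →
      r ≤ (386 + 10 * P.C + 62 * (HX.δ + HY.δ)) * D := fun r hr => by
    nlinarith [le_mul_of_one_le_right hE hD.le]
  refine ⟨fun hup => ⟨habsorb _ (hq.dist_snd_start_le hup), habsorb _ (hq.dist_fst_end_le hup)⟩,
    fun hdown => ?_⟩
  -- Exchanging the factors reverses heights, so the sides become upward in `Y ⋈ X`.
  have hup : ∀ i j, HY.height (V i j 0).1.2 < HY.height (V i j (l i j)).1.2 := fun i j => by
    rw [HoroProd.height_snd, HoroProd.height_snd]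
    exact neg_lt_neg (hdown i j)
  have ha' := hq.swap.dist_snd_start_le hup
  have hb' := hq.swap.dist_fst_end_le hup
  rw [add_comm HY.δ] at ha' hb'
  exact ⟨habsorb _ ha', habsorb _ hb'⟩
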